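/- Let q ≥ 1, let f : ℤⁿ → ℤ be a homogeneous polynomial of degree d, let y ∈ ℤⁿ, and let γ₀, γ₁ be n × n integer matrices such that y · γ₁ ≡ a · y (mod q) for some a ∈ (ℤ/qℤ)^×. Then f(y · γ₁ γ₀) ≡ 0 (mod q) if and only if f(y · γ₀) ≡ 0 (mod q). -/
import Mathlib

open MvPolynomial in
lemma eval_mul_homog {σ S : Type*} [CommSemiring S] {G : MvPolynomial σ S} {d : ℕ}
    (hG : G.IsHomogeneous d) (c : S) (x : σ → S) :
    MvPolynomial.eval (fun i => c * x i) G = c ^ d * MvPolynomial.eval x G := by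
  rw [eval_eq, eval_eq, Finset.mul_sum]
  refine Finset.sum_congr rfl fun m hm => ?_
  have hd : ∑ i ∈ m.support, m i = d := by
    have := hG (mem_support_iff.mp hm)
    simpa [Finsupp.weight_apply, Finsupp.sum] using this
  rw [← hd]
  simp only [mul_pow, Finset.prod_mul_distrib, Finset.prod_pow_eq_pow_sum]
  ring

/-- Key observation: if f is a homogeneous polynomial and y·γ₁ ≡ a·y (mod q)
with a a unit mod q, then f(y·γ₁γ₀) ≡ 0 (mod q) iff f(y·γ₀) ≡ 0 (mod q). -/
theorem homogeneous_sieve_observation (n : ℕ) (q : ℕ) (hq : 1 ≤ q) (d : ℕ)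
    (F : MvPolynomial (Fin n) ℤ) (hF : F.IsHomogeneous d)
    (y : Fin n → ℤ) (γ₀ γ₁ : Matrix (Fin n) (Fin n) ℤ)
    (a : (ZMod q)ˣ)
    (hstab : ∀ i, ((Matrix.vecMul y γ₁) i : ZMod q) = (a : ZMod q) * (y i : ZMod q)) :
    (q : ℤ) ∣ MvPolynomial.eval (Matrix.vecMul y (γ₁ * γ₀)) F ↔
      (q : ℤ) ∣ MvPolynomial.eval (Matrix.vecMul y γ₀) F := by
  set G := F.map (Int.castRingHom (ZMod q)) with hG
  have hGhom : G.IsHomogeneous d := hF.map _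
  have hcast : ∀ v : Fin n → ℤ,
      ((MvPolynomial.eval v F : ℤ) : ZMod q) =
        MvPolynomial.eval (fun i => ((v i : ZMod q))) G := by
    intro v
    rw [hG, MvPolynomial.eval_map]
    exact (MvPolynomial.eval₂_comp_left (Int.castRingHom (ZMod q))
      (RingHom.id ℤ) v F).trans rfl
  have hvm : ∀ (v : Fin n → ℤ) i, ((Matrix.vecMul v γ₀) i : ZMod q) =
      ∑ j, (v j : ZMod q) * (γ₀ j i : ZMod q) := by
    intro v i
    simp [Matrix.vecMul, dotProduct]
  have hcomp : ∀ i, ((Matrix.vecMul y (γ₁ * γ₀)) i : ZMod q) =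
      (a : ZMod q) * ((Matrix.vecMul y γ₀) i : ZMod q) := by
    intro i
    rw [← Matrix.vecMul_vecMul, hvm, hvm, Finset.mul_sum]
    refine Finset.sum_congr rfl fun j _ => ?_
    rw [hstab j]
    ring
  have key : MvPolynomial.eval (fun i => (((Matrix.vecMul y (γ₁ * γ₀)) i : ℤ) : ZMod q)) G =
      (a : ZMod q) ^ d *
        MvPolynomial.eval (fun i => (((Matrix.vecMul y γ₀) i : ℤ) : ZMod q)) G := by
    rw [funext hcomp, eval_mul_homog hGhom]
  have hdvd : ∀ z : ℤ, (q : ℤ) ∣ z ↔ ((z : ZMod q) = 0) := fun z =>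
    (ZMod.intCast_zmod_eq_zero_iff_dvd z q).symm
  rw [hdvd, hdvd, hcast, hcast, key]
  constructor
  · intro h
    have := congrArg (fun z => ((a⁻¹ : (ZMod q)ˣ) : ZMod q) ^ d * z) h
    simpa [← mul_assoc, ← mul_pow, mul_comm] using this
  · intro h; rw [h, mul_zero]
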